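/- (Claim 1, converse direction.) If a transition kernel p(m|x,y) is such that for every input distribution p_XY on 𝒳×𝒴, under the joint law of (X,Y,M) given by p_XY(x,y)·p(m|x,y), with F = f(X,Y), G = g(X,Y), H = h(X,Y), one has I(M;G|F,X) = 0 and I(M;H|F,Y) = 0, then the kernel is private against Alice with respect to g and private against Bob with respect to h. -/

import Mathlib

open scoped BigOperators

/-- A probability mass function on a finite type, given as a real-valued function. -/
def IsPMF {Ω : Type*} [Fintype Ω] (p : Ω → ℝ) : Prop :=
  (∀ ω, 0 ≤ p ω) ∧ ∑ ω, p ω = 1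

open Classical in
/-- Probability of an event under a pmf on a finite type. -/
noncomputable def probOf {Ω : Type*} [Fintype Ω] (p : Ω → ℝ) (E : Ω → Prop) : ℝ :=
  ∑ ω, if E ω then p ω else 0

/-- Distribution (pushforward) of a random variable `A` under pmf `p`. -/
noncomputable def distOf {Ω β : Type*} [Fintype Ω] [DecidableEq β]
    (p : Ω → ℝ) (A : Ω → β) : β → ℝ :=
  fun b => ∑ ω, if A ω = b then p ω else 0

/-- Shannon entropy (in nats) of a distribution on a finite type. -/
noncomputable def entD {β : Type*} [Fintype β] (q : β → ℝ) : ℝ :=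
  -∑ b, q b * Real.log (q b)

/-- Shannon entropy H(A) of a random variable `A` under pmf `p`. -/
noncomputable def entRV {Ω β : Type*} [Fintype Ω] [Fintype β] [DecidableEq β]
    (p : Ω → ℝ) (A : Ω → β) : ℝ :=
  entD (distOf p A)

/-- Conditional Shannon entropy H(A | C). -/
noncomputable def condEnt {Ω β γ : Type*} [Fintype Ω] [Fintype β] [DecidableEq β]
    [Fintype γ] [DecidableEq γ] (p : Ω → ℝ) (A : Ω → β) (C : Ω → γ) : ℝ :=
  entRV p (fun ω => (A ω, C ω)) - entRV p C

/-- Mutual information I(A; B). -/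
noncomputable def mutInfo {Ω β γ : Type*} [Fintype Ω] [Fintype β] [DecidableEq β]
    [Fintype γ] [DecidableEq γ] (p : Ω → ℝ) (A : Ω → β) (B : Ω → γ) : ℝ :=
  entRV p A + entRV p B - entRV p (fun ω => (A ω, B ω))

/-- Conditional mutual information I(A; B | C). -/
noncomputable def condMutInfo {Ω β γ δ : Type*} [Fintype Ω] [Fintype β] [DecidableEq β]
    [Fintype γ] [DecidableEq γ] [Fintype δ] [DecidableEq δ]
    (p : Ω → ℝ) (A : Ω → β) (B : Ω → γ) (C : Ω → δ) : ℝ :=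
  entRV p (fun ω => (A ω, C ω)) + entRV p (fun ω => (B ω, C ω))
    - entRV p (fun ω => (A ω, B ω, C ω)) - entRV p C

/-- Privacy against Alice with respect to `g` of a transition kernel `k(m|x,y)`,
for the function `f` being computed. -/
def PrivAlice {𝒳 𝒴 𝒵 𝒢 ℳ : Type*} (f : 𝒳 → 𝒴 → 𝒵) (g : 𝒳 → 𝒴 → 𝒢)
    (k : 𝒳 → 𝒴 → ℳ → ℝ) : Prop :=
  ∀ x y₁ y₂, g x y₁ ≠ g x y₂ → f x y₁ = f x y₂ → ∀ m, k x y₁ m = k x y₂ m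

/-- Privacy against Bob with respect to `h` of a transition kernel `k(m|x,y)`,
for the function `f` being computed. -/
def PrivBob {𝒳 𝒴 𝒵 ℋ ℳ : Type*} (f : 𝒳 → 𝒴 → 𝒵) (h : 𝒳 → 𝒴 → ℋ)
    (k : 𝒳 → 𝒴 → ℳ → ℝ) : Prop :=
  ∀ x₁ x₂ y, h x₁ y ≠ h x₂ y → f x₁ y = f x₂ y → ∀ m, k x₁ y m = k x₂ y m

/-!
Fix `x` and `y₁, y₂` with `f x y₁ = f x y₂` but `g x y₁ ≠ g x y₂`, and feed the hypothesis the
uniform input law on `{(x, y₁), (x, y₂)}`. Under it the conditioning variable `(F, X)` is constant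
and `G` only relabels which of the two inputs occurred, so `I(M; G | F, X)` is the mutual
information between `M` and a fair coin choosing the row `k x y₁` or `k x y₂` of the kernel, i.e.
the Jensen–Shannon divergence of the two rows. By strict concavity of `t ↦ -t log t` it vanishes
only when the rows coincide. Bob's side is symmetric.
-/

open Real Finset Function

lemma entD_eq_sum_negMulLog {β : Type*} [Fintype β] (q : β → ℝ) :
    entD q = ∑ b, negMulLog (q b) := by
  simp [entD, negMulLog_eq_neg, sum_neg_distrib]

lemma negMulLog_div_two (t : ℝ) : negMulLog (t / 2) = negMulLog t / 2 + t / 2 * log 2 := by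
  rcases eq_or_ne t 0 with rfl | ht
  · simp
  · rw [negMulLog, negMulLog, log_div ht two_ne_zero]
    ring

lemma negMulLog_midpoint_lt {a b : ℝ} (ha : 0 ≤ a) (hb : 0 ≤ b) (hab : a ≠ b) :
    (negMulLog a + negMulLog b) / 2 < negMulLog ((a + b) / 2) := by
  have := strictConcaveOn_negMulLog.2 (Set.mem_Ici.2 ha) (Set.mem_Ici.2 hb) hab
    (by norm_num : (0 : ℝ) < 1 / 2) (by norm_num : (0 : ℝ) < 1 / 2) (by norm_num)
  simp only [smul_eq_mul] at this
  rw [show (a + b) / 2 = 1 / 2 * a + 1 / 2 * b by ring]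
  linarith

lemma negMulLog_midpoint_le {a b : ℝ} (ha : 0 ≤ a) (hb : 0 ≤ b) :
    (negMulLog a + negMulLog b) / 2 ≤ negMulLog ((a + b) / 2) := by
  rcases eq_or_ne a b with rfl | hab
  · rw [← two_mul, mul_div_cancel_left₀ _ two_ne_zero, ← two_mul,
      mul_div_cancel_left₀ _ two_ne_zero]
  · exact (negMulLog_midpoint_lt ha hb hab).le

section Entropy

variable {Ω α β γ : Type*} [Fintype Ω] [DecidableEq α] [DecidableEq β] [DecidableEq γ]

lemma distOf_congr {p : Ω → ℝ} {A A' : Ω → β} (h : ∀ ω, p ω ≠ 0 → A ω = A' ω) :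
    distOf p A = distOf p A' := by
  funext b
  refine sum_congr rfl fun ω _ => ?_
  by_cases hω : p ω = 0
  · simp [hω]
  · rw [h ω hω]

variable [Fintype α] [Fintype β] [Fintype γ]

lemma entRV_congr {p : Ω → ℝ} {A A' : Ω → β} (h : ∀ ω, p ω ≠ 0 → A ω = A' ω) :
    entRV p A = entRV p A' := by
  rw [entRV, entRV, distOf_congr h]

lemma entRV_comp_of_injective (p : Ω → ℝ) (A : Ω → α) {e : α → β} (he : Injective e) :
    entRV p (fun ω => e (A ω)) = entRV p A := by
  rw [entRV, entRV, entD_eq_sum_negMulLog, entD_eq_sum_negMulLog]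
  refine (Fintype.sum_of_injective e he _ _ (fun b hb => ?_) fun a => ?_).symm
  · rw [distOf, sum_eq_zero fun ω _ => if_neg fun h => hb ⟨A ω, h⟩, negMulLog_zero]
  · simp only [distOf, he.eq_iff]

lemma entRV_const {p : Ω → ℝ} (hp : ∑ ω, p ω = 1) (b : β) : entRV p (fun _ => b) = 0 := by
  rw [entRV_comp_of_injective p (fun _ => ()) (fun _ _ _ => rfl : Injective fun _ : Unit => b),
    entRV, entD_eq_sum_negMulLog]
  simp [distOf, hp]

lemma entRV_prod_of_const {p : Ω → ℝ} (A : Ω → α) {C : Ω → γ} {c : γ}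
    (hC : ∀ ω, p ω ≠ 0 → C ω = c) : entRV p (fun ω => (A ω, C ω)) = entRV p A := by
  rw [entRV_congr fun ω hω => by rw [hC ω hω]]
  exact entRV_comp_of_injective p A fun _ _ h => (Prod.mk.inj h).1

lemma condMutInfo_eq_mutInfo_of_const {p : Ω → ℝ} (hp : ∑ ω, p ω = 1) (A : Ω → α) (B : Ω → β)
    {C : Ω → γ} {c : γ} (hC : ∀ ω, p ω ≠ 0 → C ω = c) :
    condMutInfo p A B C = mutInfo p A B := by
  have hABC : entRV p (fun ω => (A ω, B ω, C ω)) = entRV p (fun ω => (A ω, B ω)) :=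
    (entRV_congr fun ω hω => by rw [hC ω hω]).trans <|
      entRV_comp_of_injective p (fun ω => (A ω, B ω)) (e := fun ab : α × β => (ab.1, ab.2, c))
        fun _ _ h => Prod.ext (Prod.mk.inj h).1 (Prod.mk.inj (Prod.mk.inj h).2).1
  rw [condMutInfo, mutInfo, entRV_prod_of_const A hC, entRV_prod_of_const B hC, hABC,
    entRV_congr hC, entRV_const hp]
  ring

lemma mutInfo_congr_right {p : Ω → ℝ} (A : Ω → α) {B B' : Ω → β}
    (h : ∀ ω, p ω ≠ 0 → B ω = B' ω) : mutInfo p A B = mutInfo p A B' := by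
  rw [mutInfo, mutInfo, entRV_congr h, entRV_congr (A' := fun ω => (A ω, B' ω)) fun ω hω => by
    rw [h ω hω]]

lemma mutInfo_comp_right_of_injective (p : Ω → ℝ) (A : Ω → α) (B : Ω → β) {e : β → γ}
    (he : Injective e) : mutInfo p A (fun ω => e (B ω)) = mutInfo p A B := by
  rw [mutInfo, mutInfo, entRV_comp_of_injective p B he]
  congr 1
  exact entRV_comp_of_injective p (fun ω => (A ω, B ω)) (injective_id.prodMap he)

end Entropy

section JensenShannon

variable {ℳ : Type*} [Fintype ℳ]

noncomputable def jensenShannon (q₁ q₂ : ℳ → ℝ) : ℝ :=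
  entD (fun m => (q₁ m + q₂ m) / 2) - (entD q₁ + entD q₂) / 2

lemma jensenShannon_pos {q₁ q₂ : ℳ → ℝ} (h₁ : ∀ m, 0 ≤ q₁ m) (h₂ : ∀ m, 0 ≤ q₂ m)
    (hne : q₁ ≠ q₂) : 0 < jensenShannon q₁ q₂ := by
  obtain ⟨m, hm⟩ := Function.ne_iff.1 hne
  rw [jensenShannon, sub_pos]
  simp only [entD_eq_sum_negMulLog, ← sum_add_distrib, sum_div]
  exact sum_lt_sum (fun i _ => negMulLog_midpoint_le (h₁ i) (h₂ i))
    ⟨m, mem_univ m, negMulLog_midpoint_lt (h₁ m) (h₂ m) hm⟩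

end JensenShannon

section JointLaw

variable {S ℳ β : Type*} [Fintype S] [Fintype ℳ]

def jointLaw (w : S → ℝ) (k : S → ℳ → ℝ) (ω : S × ℳ) : ℝ := w ω.1 * k ω.1 ω.2

lemma sum_jointLaw {w : S → ℝ} (hw : ∑ s, w s = 1) {k : S → ℳ → ℝ}
    (hk : ∀ s, ∑ m, k s m = 1) :
    ∑ ω, jointLaw w k ω = 1 := by
  simp [jointLaw, Fintype.sum_prod_type, ← mul_sum, hk, hw]

variable [DecidableEq S]

noncomputable def uniformPair (s₁ s₂ s : S) : ℝ :=
  if s ∈ ({s₁, s₂} : Finset S) then 1 / 2 else 0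

lemma sum_uniformPair_mul {s₁ s₂ : S} (hs : s₁ ≠ s₂) (F : S → ℝ) :
    ∑ s, uniformPair s₁ s₂ s * F s = (F s₁ + F s₂) / 2 := by
  simp only [uniformPair, ite_mul, zero_mul, sum_ite_mem, univ_inter, sum_pair hs]
  ring

lemma isPMF_uniformPair {s₁ s₂ : S} (hs : s₁ ≠ s₂) : IsPMF (uniformPair s₁ s₂) := by
  refine ⟨fun s => ?_, by simpa using sum_uniformPair_mul hs 1⟩
  unfold uniformPair
  split_ifs <;> norm_num

lemma distOf_jointLaw_uniformPair [DecidableEq β] (k : S → ℳ → ℝ) {s₁ s₂ : S} (hs : s₁ ≠ s₂)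
    (A : S × ℳ → β) (b : β) :
    distOf (jointLaw (uniformPair s₁ s₂) k) A b =
      ((∑ m, if A (s₁, m) = b then k s₁ m else 0) +
        ∑ m, if A (s₂, m) = b then k s₂ m else 0) / 2 := by
  rw [← sum_uniformPair_mul hs fun s => ∑ m, if A (s, m) = b then k s m else 0, distOf,
    Fintype.sum_prod_type]
  simp only [jointLaw, mul_sum, mul_ite, mul_zero]

variable [DecidableEq ℳ]

lemma mutInfo_jointLaw_uniformPair {k : S → ℳ → ℝ} (hk : ∀ s, ∑ m, k s m = 1) {s₁ s₂ : S}
    (hs : s₁ ≠ s₂) :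
    mutInfo (jointLaw (uniformPair s₁ s₂) k) (fun ω => ω.2) (fun ω => decide (ω.1 = s₂)) =
      jensenShannon (k s₁) (k s₂) := by
  have hM : ∀ m, distOf (jointLaw (uniformPair s₁ s₂) k) (fun ω => ω.2) m =
      (k s₁ m + k s₂ m) / 2 := by
    simp [distOf_jointLaw_uniformPair k hs]
  have hT : ∀ b, distOf (jointLaw (uniformPair s₁ s₂) k) (fun ω => decide (ω.1 = s₂)) b =
      1 / 2 := by
    intro b
    cases b <;> simp [distOf_jointLaw_uniformPair k hs, hs, hk]
  have hMT : ∀ m, distOf (jointLaw (uniformPair s₁ s₂) k)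
      (fun ω => (ω.2, decide (ω.1 = s₂))) (m, false) = k s₁ m / 2 ∧
      distOf (jointLaw (uniformPair s₁ s₂) k)
      (fun ω => (ω.2, decide (ω.1 = s₂))) (m, true) = k s₂ m / 2 := by
    intro m
    simp [distOf_jointLaw_uniformPair k hs, hs]
  simp only [jensenShannon, mutInfo, entRV, entD_eq_sum_negMulLog, Fintype.sum_prod_type,
    Fintype.sum_bool, hM, hT, hMT, negMulLog_div_two, sum_add_distrib, ← sum_div, ← sum_mul, hk]
  rw [negMulLog_one]
  ring

theorem eq_of_forall_condMutInfo_jointLaw_eq_zero {𝒢 γ : Type*} [Fintype 𝒢] [DecidableEq 𝒢]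
    [Fintype γ] [DecidableEq γ]
    {k : S → ℳ → ℝ} (hk : ∀ s, (∀ m, 0 ≤ k s m) ∧ ∑ m, k s m = 1) (G : S → 𝒢) (C : S → γ)
    (h0 : ∀ w : S → ℝ, IsPMF w →
      condMutInfo (jointLaw w k) (fun ω => ω.2) (fun ω => G ω.1) (fun ω => C ω.1) = 0)
    {s₁ s₂ : S} (hG : G s₁ ≠ G s₂) (hC : C s₁ = C s₂) : k s₁ = k s₂ := by
  have hs : s₁ ≠ s₂ := ne_of_apply_ne G hG
  set p := jointLaw (uniformPair s₁ s₂) k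
  have hsupp : ∀ ω, p ω ≠ 0 → ω.1 = s₁ ∨ ω.1 = s₂ := by
    intro ω hω
    by_contra h
    simp [p, jointLaw, uniformPair, h] at hω
  have hp : ∑ ω, p ω = 1 := sum_jointLaw (isPMF_uniformPair hs).2 fun s => (hk s).2
  have hCconst : ∀ ω, p ω ≠ 0 → C ω.1 = C s₁ := by
    intro ω hω
    rcases hsupp ω hω with h | h <;> simp [h, hC]
  have hGT : ∀ ω, p ω ≠ 0 → G ω.1 = bif decide (ω.1 = s₂) then G s₂ else G s₁ := by
    intro ω hω
    rcases hsupp ω hω with h | h <;> simp [h, hs]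
  have he : Injective fun b : Bool => bif b then G s₂ else G s₁ := by
    intro a b
    cases a <;> cases b <;> simp [hG, hG.symm]
  have hJS : jensenShannon (k s₁) (k s₂) = 0 := by
    rw [← mutInfo_jointLaw_uniformPair (fun s => (hk s).2) hs,
      ← mutInfo_comp_right_of_injective _ _ _ he, ← mutInfo_congr_right _ hGT,
      ← condMutInfo_eq_mutInfo_of_const hp _ _ hCconst]
    exact h0 _ (isPMF_uniformPair hs)
  by_contra hne
  exact (jensenShannon_pos (hk s₁).1 (hk s₂).1 hne).ne' hJS

end JointLaw

/-- **Claim 1, converse direction.** If the transition kernel `k(m|x,y)` is such that for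
every input distribution `pXY` on `𝒳 × 𝒴`, under the joint law `pXY(x,y) · k(m|x,y)` of
`(X, Y, M)`, with `F = f(X,Y)`, `G = g(X,Y)`, `H = h(X,Y)`, one has `I(M; G | F, X) = 0`
and `I(M; H | F, Y) = 0`, then the kernel is private against Alice with respect to `g`
and private against Bob with respect to `h`. -/
theorem claim1_converse
    {𝒳 𝒴 𝒵 𝒢 ℋ ℳ : Type}
    [Fintype 𝒳] [DecidableEq 𝒳] [Fintype 𝒴] [DecidableEq 𝒴]
    [Fintype 𝒵] [DecidableEq 𝒵] [Fintype 𝒢] [DecidableEq 𝒢]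
    [Fintype ℋ] [DecidableEq ℋ] [Fintype ℳ] [DecidableEq ℳ]
    (f : 𝒳 → 𝒴 → 𝒵) (g : 𝒳 → 𝒴 → 𝒢) (h : 𝒳 → 𝒴 → ℋ)
    (k : 𝒳 → 𝒴 → ℳ → ℝ)
    (hker : ∀ x y, (∀ m, 0 ≤ k x y m) ∧ ∑ m, k x y m = 1)
    (hzero : ∀ pXY : 𝒳 × 𝒴 → ℝ, IsPMF pXY →
      condMutInfo (fun ω : (𝒳 × 𝒴) × ℳ => pXY ω.1 * k ω.1.1 ω.1.2 ω.2)
          (fun ω => ω.2) (fun ω => g ω.1.1 ω.1.2)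
          (fun ω => (f ω.1.1 ω.1.2, ω.1.1)) = 0 ∧
      condMutInfo (fun ω : (𝒳 × 𝒴) × ℳ => pXY ω.1 * k ω.1.1 ω.1.2 ω.2)
          (fun ω => ω.2) (fun ω => h ω.1.1 ω.1.2)
          (fun ω => (f ω.1.1 ω.1.2, ω.1.2)) = 0) :
    PrivAlice f g k ∧ PrivBob f h k := by
  have hk (s : 𝒳 × 𝒴) : (∀ m, 0 ≤ k s.1 s.2 m) ∧ ∑ m, k s.1 s.2 m = 1 := hker s.1 s.2
  refine ⟨fun x y₁ y₂ hg hf => congrFun ?_, fun x₁ x₂ y hh hf => congrFun ?_⟩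
  · exact eq_of_forall_condMutInfo_jointLaw_eq_zero hk (fun s => g s.1 s.2)
      (fun s => (f s.1 s.2, s.1)) (fun w hw => (hzero w hw).1) (s₁ := (x, y₁)) (s₂ := (x, y₂))
      hg (by rw [hf])
  · exact eq_of_forall_condMutInfo_jointLaw_eq_zero hk (fun s => h s.1 s.2)
      (fun s => (f s.1 s.2, s.2)) (fun w hw => (hzero w hw).2) (s₁ := (x₁, y)) (s₂ := (x₂, y))
      hh (by rw [hf])
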